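/- Let A be a continuous matrix-valued function on an interval I, and for s ∈ I let Φ_A(·; s) denote the sum of the Peano–Baker series with base point s. Then the flow property holds: Φ_A(t; s) · Φ_A(s; t₀) = Φ_A(t; t₀) for all t, s, t₀ ∈ I. -/

import Mathlib

attribute [local instance] Matrix.normedAddCommGroup Matrix.normedSpace

/-- The iterated Peano–Baker integrals with base point `t₀`: `pbIter A t₀ 0 = 1` (identity
matrix) and `pbIter A t₀ (n+1) t = ∫_{t₀}^t A τ * pbIter A t₀ n τ dτ`. -/
noncomputable def pbIter {d : ℕ} (A : ℝ → Matrix (Fin d) (Fin d) ℝ) (t₀ : ℝ) :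
    ℕ → ℝ → Matrix (Fin d) (Fin d) ℝ
  | 0 => fun _ => 1
  | n + 1 => fun t => ∫ τ in t₀..t, A τ * pbIter A t₀ n τ

/-!
On a compact interval containing the three points, let `M` bound `‖A‖`. Since the entrywise sup
norm satisfies `‖X * Y‖ ≤ d ‖X‖ ‖Y‖`, induction gives `‖I_n(t; c)‖ ≤ (d M |t - c|)^n / n!`, so all
the series converge absolutely. Splitting `∫_{t₀}^t = ∫_{t₀}^s + ∫_s^t` in the recursion gives, again
by induction, `I_n(t; t₀) = ∑_{k + j = n} I_k(t; s) I_j(s; t₀)`, and the flow property is the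
Cauchy product of the two series.
-/

open MeasureTheory Set Finset intervalIntegral
open scoped Nat Interval

namespace Matrix

/-- Derived from `Matrix.normedAddCommGroup`, this instance carries a topology that instance search
does not identify with `instTopologicalSpaceMatrix`, so `IntervalIntegrable` of matrix-valued
functions would not elaborate without it. -/
noncomputable instance instENormedAddCommMonoid {m n α : Type*} [Fintype m] [Fintype n]
    [NormedAddCommGroup α] : ENormedAddCommMonoid (Matrix m n α) :=
  inferInstanceAs (ENormedAddCommMonoid (m → n → α))

section SupNorm

variable {l m n α : Type*} [Fintype l] [Fintype m] [Fintype n] [NormedRing α]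

theorem norm_mul_le_card_mul (X : Matrix l m α) (Y : Matrix m n α) :
    ‖X * Y‖ ≤ Fintype.card m * ‖X‖ * ‖Y‖ := by
  rw [norm_le_iff (by positivity)]
  intro i j
  calc ‖(X * Y) i j‖ ≤ ∑ k, ‖X i k * Y k j‖ := by rw [mul_apply]; exact norm_sum_le _ _
    _ ≤ ∑ _k : m, ‖X‖ * ‖Y‖ := by
        gcongr with k
        exact (norm_mul_le _ _).trans (mul_le_mul (norm_entry_le_entrywise_sup_norm X)
          (norm_entry_le_entrywise_sup_norm Y) (norm_nonneg _) (norm_nonneg _))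
    _ = Fintype.card m * ‖X‖ * ‖Y‖ := by simp [mul_assoc]

theorem norm_one_le [DecidableEq n] [NormOneClass α] : ‖(1 : Matrix n n α)‖ ≤ 1 := by
  rw [norm_le_iff zero_le_one]
  intro i j
  by_cases h : i = j <;> simp [one_apply, h]

end SupNorm

theorem summable_mul_of_summable_norm {l m n ι κ : Type*} [Fintype l] [Fintype m] [Fintype n]
    {f : ι → Matrix l m ℝ} {g : κ → Matrix m n ℝ}
    (hf : Summable (‖f ·‖)) (hg : Summable (‖g ·‖)) :
    Summable fun x : ι × κ => f x.1 * g x.2 :=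
  .of_norm_bounded
    ((hf.mul_of_nonneg hg (fun _ => norm_nonneg _) fun _ => norm_nonneg _).mul_left _)
    fun _ => (norm_mul_le_card_mul _ _).trans_eq (mul_assoc _ _ _)

theorem intervalIntegral_mul_const {n : Type*} [Fintype n]
    {f : ℝ → Matrix n n ℝ} {a b : ℝ} (hf : IntervalIntegrable f volume a b) (C : Matrix n n ℝ) :
    ∫ τ in a..b, f τ * C = (∫ τ in a..b, f τ) * C :=
  (LinearMap.mulRight ℝ C).toContinuousLinearMap.intervalIntegral_comp_comm hf

end Matrix

theorem abs_integral_abs_sub_pow (c t : ℝ) (n : ℕ) :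
    |∫ τ in c..t, |τ - c| ^ n| = |t - c| ^ (n + 1) / (n + 1) := by
  have key : ∀ x : ℝ, 0 ≤ x → ∫ u in (0 : ℝ)..x, |u| ^ n = x ^ (n + 1) / (n + 1) := by
    intro x hx
    rw [integral_congr (g := fun u : ℝ => u ^ n), integral_pow]
    · simp
    · intro u hu
      rw [uIcc_of_le hx] at hu
      simp only [abs_of_nonneg hu.1]
  rw [integral_comp_sub_right (fun u => |u| ^ n), sub_self]
  rcases le_total 0 (t - c) with h | h
  · rw [key _ h, abs_of_nonneg h, abs_of_nonneg (by positivity)]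
  · have hneg : ∫ u in (0 : ℝ)..-(t - c), |u| ^ n = -∫ u in (0 : ℝ)..(t - c), |u| ^ n := by
      simpa [abs_neg, integral_symm (t - c)] using
        integral_comp_neg (a := 0) (b := -(t - c)) (fun u : ℝ => |u| ^ n)
    rw [← neg_neg (∫ u in (0 : ℝ)..(t - c), |u| ^ n), ← hneg, abs_neg, key _ (by linarith),
      abs_of_nonpos h, abs_of_nonneg (div_nonneg (pow_nonneg (neg_nonneg.2 h) _) (by positivity))]

section PeanoBaker

variable {d : ℕ} {A : ℝ → Matrix (Fin d) (Fin d) ℝ} {a b c : ℝ}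

theorem continuousOn_pbIter (hA : ContinuousOn A (Icc a b)) (hc : c ∈ Icc a b) :
    ∀ n, ContinuousOn (pbIter A c n) (Icc a b)
  | 0 => continuousOn_const
  | n + 1 => by
      have hab : a ≤ b := hc.1.trans hc.2
      have hprim := continuousOn_primitive_interval'
        ((hA.mul (continuousOn_pbIter hA hc n)).intervalIntegrable_of_Icc (μ := volume) hab)
        (by rwa [uIcc_of_le hab])
      rwa [uIcc_of_le hab] at hprim

theorem intervalIntegrable_mul_pbIter (hA : ContinuousOn A (Icc a b)) (hc : c ∈ Icc a b) (n : ℕ)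
    {x y : ℝ} (hx : x ∈ Icc a b) (hy : y ∈ Icc a b) :
    IntervalIntegrable (fun τ => A τ * pbIter A c n τ) volume x y :=
  ((hA.mul (continuousOn_pbIter hA hc n)).mono (uIcc_subset_Icc hx hy)).intervalIntegrable

theorem norm_pbIter_le (hA : ContinuousOn A (Icc a b)) (hc : c ∈ Icc a b) {M : ℝ}
    (hM : ∀ τ ∈ Icc a b, ‖A τ‖ ≤ M) :
    ∀ n, ∀ t ∈ Icc a b, ‖pbIter A c n t‖ ≤ (d * M * |t - c|) ^ n / n !
  | 0, t, _ => by simpa [pbIter] using Matrix.norm_one_le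
  | n + 1, t, ht => by
      have hdM : 0 ≤ d * M := mul_nonneg d.cast_nonneg ((norm_nonneg _).trans (hM c hc))
      have hintegrand : ∀ τ ∈ Ι c t,
          ‖A τ * pbIter A c n τ‖ ≤ (d * M) ^ (n + 1) / n ! * |τ - c| ^ n := by
        intro τ hτ
        have hτ' : τ ∈ Icc a b := uIcc_subset_Icc hc ht (Ioc_subset_Icc_self hτ)
        calc ‖A τ * pbIter A c n τ‖ ≤ d * ‖A τ‖ * ‖pbIter A c n τ‖ := by
              simpa using Matrix.norm_mul_le_card_mul (A τ) (pbIter A c n τ)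
          _ ≤ d * M * ((d * M * |τ - c|) ^ n / n !) := by
              gcongr
              exacts [hM τ hτ', norm_pbIter_le hA hc hM n τ hτ']
          _ = (d * M) ^ (n + 1) / n ! * |τ - c| ^ n := by ring
      calc ‖pbIter A c (n + 1) t‖
          ≤ |∫ τ in c..t, (d * M) ^ (n + 1) / n ! * |τ - c| ^ n| :=
            norm_integral_le_abs_of_norm_le
              ((ae_restrict_mem measurableSet_uIoc).mono hintegrand)
              (Continuous.intervalIntegrable (by fun_prop) _ _)
        _ = (d * M) ^ (n + 1) / n ! * (|t - c| ^ (n + 1) / (n + 1)) := by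
            rw [intervalIntegral.integral_const_mul, abs_mul, abs_integral_abs_sub_pow,
              abs_of_nonneg (by positivity)]
        _ = (d * M * |t - c|) ^ (n + 1) / (n + 1)! := by
            rw [Nat.factorial_succ]
            push_cast
            field_simp
            ring

theorem summable_norm_pbIter (hA : ContinuousOn A (Icc a b)) (hc : c ∈ Icc a b) {t : ℝ}
    (ht : t ∈ Icc a b) : Summable fun n => ‖pbIter A c n t‖ := by
  obtain ⟨M, hM⟩ := isCompact_Icc.exists_bound_of_continuousOn hA
  exact .of_nonneg_of_le (fun _ => norm_nonneg _) (fun n => norm_pbIter_le hA hc hM n t ht)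
    (Real.summable_pow_div_factorial _)

theorem pbIter_eq_sum_antidiagonal (hA : ContinuousOn A (Icc a b)) {s t₀ : ℝ}
    (hs : s ∈ Icc a b) (ht₀ : t₀ ∈ Icc a b) :
    ∀ n, ∀ t ∈ Icc a b,
      pbIter A t₀ n t = ∑ p ∈ antidiagonal n, pbIter A s p.1 t * pbIter A t₀ p.2 s
  | 0, t, _ => by simp [pbIter]
  | n + 1, t, ht => by
      have hintegral : ∫ τ in s..t, A τ * pbIter A t₀ n τ
          = ∑ p ∈ antidiagonal n, pbIter A s (p.1 + 1) t * pbIter A t₀ p.2 s := calc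
        _ = ∫ τ in s..t, ∑ p ∈ antidiagonal n, A τ * pbIter A s p.1 τ * pbIter A t₀ p.2 s := by
            refine integral_congr fun τ hτ => ?_
            simp only [pbIter_eq_sum_antidiagonal hA hs ht₀ n τ (uIcc_subset_Icc hs ht hτ),
              mul_sum, mul_assoc]
        _ = ∑ p ∈ antidiagonal n, pbIter A s (p.1 + 1) t * pbIter A t₀ p.2 s := by
            rw [integral_finsetSum fun p _ => (((hA.mul (continuousOn_pbIter hA hs p.1)).mul
              continuousOn_const).mono (uIcc_subset_Icc hs ht)).intervalIntegrable]
            exact sum_congr rfl fun p _ => Matrix.intervalIntegral_mul_const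
              (intervalIntegrable_mul_pbIter hA hs p.1 hs ht) _
      calc pbIter A t₀ (n + 1) t
          = pbIter A t₀ (n + 1) s + ∫ τ in s..t, A τ * pbIter A t₀ n τ :=
            (integral_add_adjacent_intervals (intervalIntegrable_mul_pbIter hA ht₀ n ht₀ hs)
              (intervalIntegrable_mul_pbIter hA ht₀ n hs ht)).symm
        _ = _ := by rw [hintegral, Nat.sum_antidiagonal_succ]; simp [pbIter]

theorem tsum_pbIter_mul_tsum_pbIter (hA : ContinuousOn A (Icc a b)) {t s t₀ : ℝ}
    (ht : t ∈ Icc a b) (hs : s ∈ Icc a b) (ht₀ : t₀ ∈ Icc a b) :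
    (∑' n, pbIter A s n t) * (∑' n, pbIter A t₀ n s) = ∑' n, pbIter A t₀ n t := by
  have hf := summable_norm_pbIter hA hs ht
  have hg := summable_norm_pbIter hA ht₀ hs
  -- `Summable.of_norm` yields summability for the topology of the norm; the ascriptions restate
  -- it for `instTopologicalSpaceMatrix`, in which the goal's series are taken.
  have hf' : Summable fun n => pbIter A s n t := hf.of_norm
  have hg' : Summable fun n => pbIter A t₀ n s := hg.of_norm
  have hfg := Matrix.summable_mul_of_summable_norm hf hg
  rw [hf'.tsum_mul_tsum_eq_tsum_sum_antidiagonal hg' hfg]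
  exact tsum_congr fun n => (pbIter_eq_sum_antidiagonal hA hs ht₀ n t ht).symm

end PeanoBaker

theorem stmt12_general {d : ℕ} (A : ℝ → Matrix (Fin d) (Fin d) ℝ)
    (I : Set ℝ) (hI : I.OrdConnected) (hA : ContinuousOn A I) :
    ∀ t ∈ I, ∀ s ∈ I, ∀ t₀ ∈ I,
      (∑' n : ℕ, pbIter A s n t) * (∑' n : ℕ, pbIter A t₀ n s)
        = ∑' n : ℕ, pbIter A t₀ n t := by
  intro t ht s hs t₀ ht₀
  have hsub : Icc (min t (min s t₀)) (max t (max s t₀)) ⊆ I :=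
    hI.out (min_rec' (· ∈ I) ht (min_rec' (· ∈ I) hs ht₀))
      (max_rec' (· ∈ I) ht (max_rec' (· ∈ I) hs ht₀))
  exact tsum_pbIter_mul_tsum_pbIter (hA.mono hsub) ⟨by simp, by simp⟩ ⟨by simp, by simp⟩
    ⟨by simp, by simp⟩

theorem stmt12 {d : ℕ} (hd : 1 ≤ d) (A : ℝ → Matrix (Fin d) (Fin d) ℝ)
    (I : Set ℝ) (hI : I.OrdConnected) (hA : ContinuousOn A I) :
    ∀ t ∈ I, ∀ s ∈ I, ∀ t₀ ∈ I,
      (∑' n : ℕ, pbIter A s n t) * (∑' n : ℕ, pbIter A t₀ n s)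
        = ∑' n : ℕ, pbIter A t₀ n t :=
  stmt12_general A I hI hA
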